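/- arXiv:1805.12152 — 3 statements merged into one kernel-verified Lean document; each statement's English description precedes it below -/
import Mathlib

section
/- Any optimal solution w* of the soft-margin SVM objective min_w E[max(0, 1 - y wᵀx)] + (λ/2)‖w‖₂² over the distribution D satisfies w*_i = w*_j for all i, j ∈ {2,...,d+1}. -/
/-!
The hinge risk `w ↦ E[max(0, 1 - y wᵀx)]` is convex in `w`, and since the Gaussian coordinates
`x₂, …, x_{d+1}` are i.i.d. given `y`, it is unchanged when the weights `w₂, …, w_{d+1}` are
permuted. Averaging `w` with its image under the transposition `(i j)` therefore does not increase
the risk, while it lowers `‖w‖²` by `(wᵢ - wⱼ)² / 2`; at a minimiser this forces `wᵢ = wⱼ`.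
-/

open MeasureTheory ProbabilityTheory Real
open scoped ENNReal NNReal

noncomputable def signM : Measure ℝ :=
  (1/2 : ℝ≥0∞) • Measure.dirac (-1) + (1/2 : ℝ≥0∞) • Measure.dirac 1

noncomputable def flipM (p : ℝ) : Measure ℝ :=
  ENNReal.ofReal p • Measure.dirac 1 + ENNReal.ofReal (1 - p) • Measure.dirac (-1)

noncomputable def dataD (p η : ℝ) (d : ℕ) : Measure ((ℝ × (Fin d → ℝ)) × ℝ) :=
  signM.bind fun y =>
    (((flipM p).map (fun s => s * y)).prod
      (Measure.pi fun _ : Fin d => gaussianReal (η * y) 1)).map (fun x => (x, y))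

/-- The soft-margin SVM objective E[max(0, 1 - y wᵀx)] + (λ/2)‖w‖₂² over D,
with weights w = (w₁, (w₂,…,w_{d+1})). -/
noncomputable def svmObj (p η : ℝ) (d : ℕ) (lam : ℝ) (w : ℝ × (Fin d → ℝ)) : ℝ :=
  (∫ ω, max 0 (1 - ω.2 * (w.1 * ω.1.1 + ∑ i, w.2 i * ω.1.2 i)) ∂(dataD p η d))
    + lam / 2 * (w.1 ^ 2 + ∑ i, (w.2 i) ^ 2)

lemma bind_signM {α : Type*} [MeasurableSpace α] (κ : ℝ → Measure α) :
    signM.bind κ = (1/2 : ℝ≥0∞) • κ (-1) + (1/2 : ℝ≥0∞) • κ 1 := by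
  ext s hs
  have hκ : AEMeasurable κ signM :=
    (aemeasurable_dirac.smul_measure _).add_measure (aemeasurable_dirac.smul_measure _)
  rw [Measure.bind_apply hs hκ]
  simp [signM, lintegral_add_measure, lintegral_smul_measure]

lemma integrable_flipM (p : ℝ) (f : ℝ → ℝ) : Integrable f (flipM p) :=
  ((integrable_dirac enorm_lt_top).smul_measure ENNReal.ofReal_ne_top).add_measure
    ((integrable_dirac enorm_lt_top).smul_measure ENNReal.ofReal_ne_top)

instance (p : ℝ) : IsFiniteMeasure (flipM p) :=
  ⟨by simp [flipM, ENNReal.add_lt_top]⟩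

lemma measurePreserving_comp_perm {ι β : Type*} [Fintype ι] [MeasurableSpace β]
    (μ : Measure β) [SigmaFinite μ] (σ : Equiv.Perm ι) :
    MeasurePreserving (fun v : ι → β => v ∘ σ) (Measure.pi fun _ => μ) (Measure.pi fun _ => μ) :=
  measurePreserving_arrowCongr' (fun _ => μ) (fun _ => μ) σ.symm (MeasurableEquiv.refl β)
    (fun _ => MeasurePreserving.id μ)

noncomputable def featureLaw (p η : ℝ) (d : ℕ) (y : ℝ) : Measure (ℝ × (Fin d → ℝ)) :=
  ((flipM p).map (fun s => s * y)).prod (Measure.pi fun _ : Fin d => gaussianReal (η * y) 1)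

lemma dataD_eq (p η : ℝ) (d : ℕ) :
    dataD p η d = (1/2 : ℝ≥0∞) • (featureLaw p η d (-1)).map (fun x => (x, -1))
      + (1/2 : ℝ≥0∞) • (featureLaw p η d 1).map (fun x => (x, 1)) :=
  bind_signM _

section featureLaw

variable (p η : ℝ) {d : ℕ} (y : ℝ)

instance : IsFiniteMeasure (featureLaw p η d y) := by
  unfold featureLaw; infer_instance

lemma integrable_fst_featureLaw : Integrable Prod.fst (featureLaw p η d y) := by
  have h : Integrable id ((flipM p).map (fun s => s * y)) :=
    (integrable_map_measure aestronglyMeasurable_id (by fun_prop)).2 (integrable_flipM p _)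
  exact h.comp_fst _

lemma integrable_apply_snd_featureLaw (i : Fin d) :
    Integrable (fun x => x.2 i) (featureLaw p η d y) := by
  have h : Integrable id (gaussianReal (η * y) 1) :=
    memLp_one_iff_integrable.1 (memLp_id_gaussianReal 1)
  have heval := measurePreserving_eval (fun _ : Fin d => gaussianReal (η * y) 1) i
  exact (heval.integrable_comp_of_integrable h).comp_snd _

lemma map_comp_perm_featureLaw (σ : Equiv.Perm (Fin d)) :
    (featureLaw p η d y).map (Prod.map id (· ∘ σ)) = featureLaw p η d y := by
  rw [featureLaw, ← Measure.map_prod_map _ _ measurable_id (by fun_prop), Measure.map_id,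
    (measurePreserving_comp_perm _ σ).map_eq]

end featureLaw

noncomputable def hingeLoss {d : ℕ} (w : ℝ × (Fin d → ℝ)) (ω : (ℝ × (Fin d → ℝ)) × ℝ) : ℝ :=
  max 0 (1 - ω.2 * (w.1 * ω.1.1 + ∑ i, w.2 i * ω.1.2 i))

lemma integrable_hingeLoss (p η : ℝ) {d : ℕ} (w : ℝ × (Fin d → ℝ)) :
    Integrable (hingeLoss w) (dataD p η d) := by
  have hy : ∀ y : ℝ, Integrable (fun x => hingeLoss w (x, y)) (featureLaw p η d y) := fun y => by
    have hscore : Integrable (fun x => w.1 * x.1 + ∑ i, w.2 i * x.2 i) (featureLaw p η d y) :=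
      ((integrable_fst_featureLaw p η y).const_mul w.1).add
        (integrable_finsetSum _ fun i _ => (integrable_apply_snd_featureLaw p η y i).const_mul _)
    have hmargin := (integrable_const (1 : ℝ)).sub (hscore.const_mul y)
    simpa only [hingeLoss, Pi.sub_apply, max_comm] using hmargin.pos_part
  rw [dataD_eq]
  refine (Integrable.smul_measure ?_ (by simp)).add_measure (Integrable.smul_measure ?_ (by simp))
  all_goals exact ((measurableEmbedding_prod_mk_right _).integrable_map_iff).2 (hy _)

lemma convexOn_hingeLoss {d : ℕ} (ω : (ℝ × (Fin d → ℝ)) × ℝ) :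
    ConvexOn ℝ Set.univ (hingeLoss · ω) := by
  refine ⟨convex_univ, fun u _ v _ a b ha hb hab => ?_⟩
  set m : ℝ × (Fin d → ℝ) → ℝ := fun w => 1 - ω.2 * (w.1 * ω.1.1 + ∑ i, w.2 i * ω.1.2 i)
  have hm : m (a • u + b • v) = a * m u + b * m v := by
    simp only [m, Prod.fst_add, Prod.snd_add, Prod.smul_fst, Prod.smul_snd, Pi.add_apply,
      Pi.smul_apply, smul_eq_mul, add_mul, Finset.sum_add_distrib, mul_assoc, ← Finset.mul_sum]
    linear_combination -hab
  show max 0 (m (a • u + b • v)) ≤ a • max 0 (m u) + b • max 0 (m v)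
  rw [hm, smul_eq_mul, smul_eq_mul]
  exact max_le (by positivity) (add_le_add (mul_le_mul_of_nonneg_left (le_max_right _ _) ha)
    (mul_le_mul_of_nonneg_left (le_max_right _ _) hb))

lemma hingeLoss_comp_perm {d : ℕ} (σ : Equiv.Perm (Fin d)) (w : ℝ × (Fin d → ℝ))
    (ω : (ℝ × (Fin d → ℝ)) × ℝ) :
    hingeLoss (w.1, w.2 ∘ σ) ω = hingeLoss w (Prod.map (Prod.map id (· ∘ σ.symm)) id ω) := by
  simp only [hingeLoss, Function.comp_apply, Prod.map_fst, Prod.map_snd, id_eq,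
    ← Equiv.sum_comp σ (fun k => w.2 k * ω.1.2 (σ.symm k)), Equiv.symm_apply_apply]

lemma measurePreserving_permute_dataD (p η : ℝ) {d : ℕ} (σ : Equiv.Perm (Fin d)) :
    MeasurePreserving (Prod.map (Prod.map id (· ∘ σ)) id) (dataD p η d) (dataD p η d) := by
  refine ⟨by fun_prop, ?_⟩
  have hy : ∀ y : ℝ, ((featureLaw p η d y).map (fun x => (x, y))).map
      (Prod.map (Prod.map id (· ∘ σ)) id) = (featureLaw p η d y).map (fun x => (x, y)) := by
    intro y
    rw [Measure.map_map (by fun_prop) (by fun_prop)]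
    rw [show Prod.map (Prod.map id (· ∘ σ)) id ∘ (fun x => (x, y))
        = (fun x => (x, y)) ∘ Prod.map id (· ∘ σ) from rfl,
      ← Measure.map_map (by fun_prop) (by fun_prop), map_comp_perm_featureLaw]
  rw [dataD_eq, Measure.map_add _ _ (by fun_prop), Measure.map_smul, Measure.map_smul, hy, hy]

lemma integral_hingeLoss_comp_perm (p η : ℝ) {d : ℕ} (σ : Equiv.Perm (Fin d))
    (w : ℝ × (Fin d → ℝ)) :
    ∫ ω, hingeLoss (w.1, w.2 ∘ σ) ω ∂(dataD p η d) = ∫ ω, hingeLoss w ω ∂(dataD p η d) := by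
  have hT := measurePreserving_permute_dataD p η σ.symm
  simp_rw [hingeLoss_comp_perm]
  rw [← integral_map hT.measurable.aemeasurable, hT.map_eq]
  exact (by unfold hingeLoss; fun_prop : Continuous (hingeLoss w)).aestronglyMeasurable

lemma convexOn_integral_hingeLoss (p η : ℝ) (d : ℕ) :
    ConvexOn ℝ Set.univ fun w : ℝ × (Fin d → ℝ) => ∫ ω, hingeLoss w ω ∂(dataD p η d) :=
  integral_convexOn_of_integrand_ae convex_univ (ae_of_all _ convexOn_hingeLoss)
    fun w _ => integrable_hingeLoss p η w

def sqNorm {d : ℕ} (w : ℝ × (Fin d → ℝ)) : ℝ :=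
  w.1 ^ 2 + ∑ i, (w.2 i) ^ 2

lemma sqNorm_midpoint {d : ℕ} (u v : ℝ × (Fin d → ℝ)) :
    sqNorm ((1/2 : ℝ) • u + (1/2 : ℝ) • v) = (sqNorm u + sqNorm v) / 2 - sqNorm (u - v) / 4 := by
  have hsum : ∑ i, ((1/2 : ℝ) * u.2 i + (1/2 : ℝ) * v.2 i) ^ 2
      = ∑ i, ((u.2 i ^ 2 + v.2 i ^ 2) / 2 - (u.2 i - v.2 i) ^ 2 / 4) :=
    Finset.sum_congr rfl fun i _ => by ring
  simp only [sqNorm, Prod.fst_add, Prod.snd_add, Prod.smul_fst, Prod.smul_snd, Prod.fst_sub,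
    Prod.snd_sub, Pi.add_apply, Pi.smul_apply, Pi.sub_apply, smul_eq_mul, hsum,
    Finset.sum_sub_distrib, ← Finset.sum_div, Finset.sum_add_distrib]
  ring

lemma sqNorm_comp_perm {d : ℕ} (σ : Equiv.Perm (Fin d)) (w : ℝ × (Fin d → ℝ)) :
    sqNorm (w.1, w.2 ∘ σ) = sqNorm w := by
  simp only [sqNorm, Function.comp_apply, Equiv.sum_comp σ (fun i => w.2 i ^ 2)]

lemma sq_apply_snd_le_sqNorm {d : ℕ} (w : ℝ × (Fin d → ℝ)) (i : Fin d) :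
    (w.2 i) ^ 2 ≤ sqNorm w :=
  (Finset.single_le_sum (fun k _ => sq_nonneg (w.2 k)) (Finset.mem_univ i)).trans
    (le_add_of_nonneg_left (sq_nonneg _))

lemma svmObj_eq (p η : ℝ) (d : ℕ) (lam : ℝ) (w : ℝ × (Fin d → ℝ)) :
    svmObj p η d lam w = ∫ ω, hingeLoss w ω ∂(dataD p η d) + lam / 2 * sqNorm w :=
  rfl

theorem svm_optimal_symmetric_general (p η lam : ℝ) (d : ℕ) (hlam : 0 < lam)
    (w : ℝ × (Fin d → ℝ))
    (hopt : ∀ w' : ℝ × (Fin d → ℝ), svmObj p η d lam w ≤ svmObj p η d lam w') :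
    ∀ i j : Fin d, w.2 i = w.2 j := by
  intro i j
  set w' : ℝ × (Fin d → ℝ) := (w.1, w.2 ∘ Equiv.swap i j)
  set m : ℝ × (Fin d → ℝ) := (1/2 : ℝ) • w + (1/2 : ℝ) • w'
  have hrisk : ∫ ω, hingeLoss m ω ∂(dataD p η d) ≤ ∫ ω, hingeLoss w ω ∂(dataD p η d) := by
    have h := (convexOn_integral_hingeLoss p η d).2 (Set.mem_univ w) (Set.mem_univ w')
      (by norm_num : (0 : ℝ) ≤ 1/2) (by norm_num : (0 : ℝ) ≤ 1/2) (by norm_num)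
    simp only [smul_eq_mul, w', integral_hingeLoss_comp_perm] at h
    linarith
  have hreg : sqNorm m = sqNorm w - sqNorm (w - w') / 4 := by
    rw [sqNorm_midpoint, sqNorm_comp_perm]
    ring
  have hgap : sqNorm (w - w') ≤ 0 := by
    have h := hopt m
    rw [svmObj_eq, svmObj_eq, hreg] at h
    nlinarith
  have hcoord : (w.2 i - w.2 j) ^ 2 ≤ 0 := by
    simpa [w'] using (sq_apply_snd_le_sqNorm (w - w') i).trans hgap
  exact sub_eq_zero.1 (pow_eq_zero_iff two_ne_zero |>.1 (le_antisymm hcoord (sq_nonneg _)))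

/-- Any optimal solution of the soft-margin SVM objective over D assigns equal
weight to all the features x₂, …, x_{d+1}. -/
theorem svm_optimal_symmetric (p η lam : ℝ) (d : ℕ)
    (hp : 1/2 ≤ p) (hp1 : p < 1) (hη : 0 < η) (hlam : 0 < lam)
    (w : ℝ × (Fin d → ℝ))
    (hopt : ∀ w' : ℝ × (Fin d → ℝ), svmObj p η d lam w ≤ svmObj p η d lam w') :
    ∀ i j : Fin d, w.2 i = w.2 j :=
  svm_optimal_symmetric_general p η lam d hlam w hopt
end

section
/- Against an ℓ∞ adversary with ε = 2η that shifts each coordinate x_i (i ≥ 2) by -2ηy, the SVM classifier sign(w₁x₁ + vz) with v ≥ 1/√2 and w₁² + v² = 1 predicts the wrong class with probability at least 99%: the shifted aggregate z_adv satisfies y·v·z_adv ~ N(-4v, v²), so P[y v z_adv < -1/√2] ≥ Φ(4 - √2) > 0.99. -/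
open MeasureTheory ProbabilityTheory Real
open scoped ENNReal NNReal

lemma svm_aux_int1 : Integrable (fun x : ℝ => Real.exp (-x^2/2)) := by
  have h : Integrable (fun x : ℝ => Real.exp (-(1/2 : ℝ) * x^2)) :=
    integrable_exp_neg_mul_sq (by norm_num)
  have he : (fun x:ℝ => Real.exp (-x^2/2)) = fun x => Real.exp (-(1/2 : ℝ)*x^2) := by
    funext x; congr 1; ring
  rw [he]; exact h

lemma svm_aux_int2 : Integrable (fun x : ℝ => x * Real.exp (-x^2/2)) := by
  have h : Integrable (fun x : ℝ => x * Real.exp (-(1/2 : ℝ) * x^2)) :=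
    integrable_mul_exp_neg_mul_sq (by norm_num)
  have he : (fun x:ℝ => x * Real.exp (-x^2/2)) = fun x => x * Real.exp (-(1/2 : ℝ)*x^2) := by
    funext x; congr 2; ring
  rw [he]; exact h

lemma svm_aux_pdf_eq (x : ℝ) :
    gaussianPDFReal 0 1 x = (Real.sqrt (2*π))⁻¹ * Real.exp (-x^2/2) := by
  rw [gaussianPDFReal]
  norm_num

open Filter in
lemma svm_aux_tendsto0 :
    Tendsto (fun y : ℝ => -Real.exp (-y^2/2)) atBot (nhds 0) := by
  have h1 : Tendsto (fun y : ℝ => y^2) atBot atTop := by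
    have h := (tendsto_pow_atTop (α := ℝ) (n:=2) (by norm_num)).comp tendsto_neg_atBot_atTop
    have he : ((fun x:ℝ => x^2) ∘ Neg.neg) = fun y:ℝ => y^2 := by
      funext y; simp [Function.comp, neg_sq]
    rwa [he] at h
  have h2 : Tendsto (fun y : ℝ => -y^2/2) atBot atBot := by
    have h3 := (tendsto_neg_atTop_atBot.comp h1)
    have h4 := h3.atBot_div_const (by norm_num : (0:ℝ) < 2)
    have he : ((fun x:ℝ => (Neg.neg ∘ fun y:ℝ => y^2) x / 2)) = fun y:ℝ => -y^2/2 := by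
      funext y; simp [Function.comp]
    rwa [he] at h4
  have h5 := Real.tendsto_exp_atBot.comp h2
  have he : (Real.exp ∘ fun y:ℝ => -y^2/2) = fun y:ℝ => Real.exp (-y^2/2) := rfl
  rw [he] at h5
  simpa using h5.neg

open Set in
lemma svm_aux_key_int (c : ℝ) :
    ∫ x in Iic c, x * Real.exp (-x^2/2) = -Real.exp (-c^2/2) := by
  have hd : ∀ x ∈ Iic c,
      HasDerivAt (fun y : ℝ => -Real.exp (-y^2/2)) (x * Real.exp (-x^2/2)) x := by
    intro x _
    have h1 : HasDerivAt (fun y : ℝ => -y^2/2) (-x) x := by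
      have h := ((hasDerivAt_pow 2 x).neg.div_const 2)
      refine h.congr_deriv ?_
      push_cast; ring
    have h2 := (h1.exp).neg
    refine h2.congr_deriv ?_
    ring
  rw [integral_Iic_of_hasDerivAt_of_tendsto' hd svm_aux_int2.integrableOn svm_aux_tendsto0]
  simp

open Set in
lemma svm_aux_tail_lt :
    gaussianReal 0 1 (Set.Iic (Real.sqrt 2 - 4)) < ENNReal.ofReal 0.01 := by
  rw [gaussianReal_apply_eq_integral 0 one_ne_zero]
  set c : ℝ := Real.sqrt 2 - 4 with hcdef
  have hs2 : Real.sqrt 2 ^ 2 = 2 := Real.sq_sqrt (by norm_num)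
  have hs2' : (0:ℝ) ≤ Real.sqrt 2 := Real.sqrt_nonneg 2
  have hs2le : Real.sqrt 2 ≤ 3/2 := by nlinarith
  have hcneg : c < 0 := by rw [hcdef]; nlinarith
  have hpdfint : ∫ x in Iic c, gaussianPDFReal 0 1 x
      = (Real.sqrt (2*π))⁻¹ * ∫ x in Iic c, Real.exp (-x^2/2) := by
    simp_rw [svm_aux_pdf_eq]
    rw [integral_const_mul _ _]
  rw [hpdfint]
  have hmono : ∫ x in Iic c, Real.exp (-x^2/2)
      ≤ c⁻¹ * ∫ x in Iic c, x * Real.exp (-x^2/2) := by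
    rw [← integral_const_mul _ _]
    refine setIntegral_mono_on svm_aux_int1.integrableOn
      (svm_aux_int2.integrableOn.const_mul _) measurableSet_Iic ?_
    intro x hx
    have hx' : x ≤ c := hx
    have hcinv : c⁻¹ < 0 := inv_lt_zero.mpr hcneg
    have h1 : (1:ℝ) ≤ c⁻¹ * x := by
      have h := mul_le_mul_of_nonpos_left hx' hcinv.le
      rwa [inv_mul_cancel₀ hcneg.ne] at h
    calc Real.exp (-x^2/2) = 1 * Real.exp (-x^2/2) := by ring
      _ ≤ (c⁻¹ * x) * Real.exp (-x^2/2) :=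
          mul_le_mul_of_nonneg_right h1 (Real.exp_pos _).le
      _ = c⁻¹ * (x * Real.exp (-x^2/2)) := by ring
  rw [svm_aux_key_int] at hmono
  have hcb : (5/2 : ℝ) ≤ -c := by rw [hcdef]; nlinarith
  have hπ : (5/2 : ℝ) ≤ Real.sqrt (2*π) := by
    have h : ((5:ℝ)/2)^2 ≤ 2*π := by nlinarith [Real.pi_gt_d6]
    nlinarith [Real.sq_sqrt (by positivity : (0:ℝ) ≤ 2*π), Real.sqrt_nonneg (2*π),
      Real.sqrt_lt_sqrt (by positivity) (lt_of_le_of_ne h (by nlinarith [Real.pi_gt_d6]))]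
  have hE : Real.exp (-c^2/2) ≤ Real.exp (-3) := by
    apply Real.exp_le_exp.mpr
    rw [hcdef]; nlinarith
  have hexp3 : Real.exp (-3 : ℝ) < 1/20 := by
    rw [Real.exp_neg]
    have h20 : (20:ℝ) < Real.exp 3 := by
      have h := Real.exp_one_gt_d9
      have h3 : Real.exp 3 = Real.exp 1 ^ 3 := by
        rw [← Real.exp_nat_mul]; norm_num
      rw [h3]
      have hp : (2.7182818283:ℝ)^3 < Real.exp 1 ^ 3 :=
        pow_lt_pow_left₀ h (by norm_num) (by norm_num)
      nlinarith
    rw [inv_lt_iff_one_lt_mul₀' (by positivity)]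
    nlinarith
  have hval : (Real.sqrt (2*π))⁻¹ * ∫ x in Iic c, Real.exp (-x^2/2) < 0.01 := by
    have hEpos : 0 < Real.exp (-c^2/2) := Real.exp_pos _
    have hcinv : c⁻¹ * -Real.exp (-c^2/2) = (-c)⁻¹ * Real.exp (-c^2/2) := by
      rw [inv_neg]; ring
    have hb1 : (-c)⁻¹ ≤ (5/2 : ℝ)⁻¹ := inv_anti₀ (by norm_num) hcb
    have hb2 : (Real.sqrt (2*π))⁻¹ ≤ (5/2 : ℝ)⁻¹ := inv_anti₀ (by norm_num) hπ
    have hI : ∫ x in Iic c, Real.exp (-x^2/2) ≤ (-c)⁻¹ * Real.exp (-c^2/2) := by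
      rw [← hcinv]; exact hmono
    have hIpos : 0 ≤ ∫ x in Iic c, Real.exp (-x^2/2) := by
      apply setIntegral_nonneg measurableSet_Iic
      intro x _; exact (Real.exp_pos _).le
    calc (Real.sqrt (2*π))⁻¹ * ∫ x in Iic c, Real.exp (-x^2/2)
        ≤ (5/2 : ℝ)⁻¹ * ((5/2 : ℝ)⁻¹ * Real.exp (-c^2/2)) := by
          have h1 : ∫ x in Iic c, Real.exp (-x^2/2) ≤ (5/2 : ℝ)⁻¹ * Real.exp (-c^2/2) :=
            hI.trans (mul_le_mul_of_nonneg_right hb1 hEpos.le)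
          have h2 : (Real.sqrt (2*π))⁻¹ * ∫ x in Iic c, Real.exp (-x^2/2)
              ≤ (5/2 : ℝ)⁻¹ * ∫ x in Iic c, Real.exp (-x^2/2) :=
            mul_le_mul_of_nonneg_right hb2 hIpos
          exact h2.trans (mul_le_mul_of_nonneg_left h1 (by norm_num))
      _ < 0.01 := by nlinarith
  exact (ENNReal.ofReal_lt_ofReal_iff (by norm_num)).mpr hval

lemma svm_aux_gauss_symm (c : ℝ) :
    gaussianReal 0 1 (Set.Ioi c) = gaussianReal 0 1 (Set.Iio (-c)) := by
  have h := gaussianReal_map_const_mul (μ := 0) (v := 1) (-1)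
  have h1 : (⟨(-1:ℝ)^2, sq_nonneg _⟩ : ℝ≥0) * 1 = 1 := by
    ext; norm_num
  rw [mul_zero] at h
  erw [h1] at h
  rw [show gaussianReal (0:ℝ) 1 (Set.Ioi c)
      = (Measure.map (fun x : ℝ => -1 * x) (gaussianReal 0 1)) (Set.Ioi c) from by rw [h]; rfl,
    Measure.map_apply (measurable_const_mul _) measurableSet_Ioi]
  congr 1
  ext x
  simp only [Set.mem_preimage, Set.mem_Ioi, Set.mem_Iio]
  constructor <;> intro hx <;> linarith

lemma svm_aux_gauss_shift (a : ℝ) (s : Set ℝ) (hs : MeasurableSet s) :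
    gaussianReal a 1 s = gaussianReal 0 1 ((· + a) ⁻¹' s) := by
  have h := gaussianReal_map_add_const (μ := 0) (v := 1) a
  rw [zero_add] at h
  rw [← h, Measure.map_apply (measurable_add_const a) hs]

/-- Against the ℓ∞ adversary with ε = 2η that shifts the aggregated feature to
z_adv ~ N(-4y, 1), the SVM classifier sign(w₁x₁ + v·z_adv) with unit norm and
v ≥ 1/√2 predicts the wrong class -y with probability at least
Φ(4 - √2) = P[N(0,1) > √2 - 4] > 0.99, regardless of x₁ ∈ {±1}. -/
theorem svm_adversarial_failure (w₁ v y x₁ : ℝ)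
    (hnorm : w₁ ^ 2 + v ^ 2 = 1) (hv : 1 / Real.sqrt 2 ≤ v)
    (hy : y = -1 ∨ y = 1) (hx : x₁ = -1 ∨ x₁ = 1) :
    gaussianReal 0 1 (Set.Ioi (Real.sqrt 2 - 4))
        ≤ gaussianReal (-(4 * y)) 1
            {z | (if 0 < w₁ * x₁ + v * z then (1:ℝ) else -1) = -y} ∧
      ENNReal.ofReal 0.99 < gaussianReal 0 1 (Set.Ioi (Real.sqrt 2 - 4)) := by
  have hs2 : Real.sqrt 2 ^ 2 = 2 := Real.sq_sqrt (by norm_num)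
  have hs2' : (0:ℝ) < Real.sqrt 2 := Real.sqrt_pos.mpr (by norm_num)
  have hvpos : 0 < v := lt_of_lt_of_le (by positivity) hv
  have hv1 : (1:ℝ) ≤ Real.sqrt 2 * v := by
    have h := mul_le_mul_of_nonneg_left hv hs2'.le
    rw [mul_one_div, div_self hs2'.ne'] at h
    linarith
  have hx1 : x₁^2 = 1 := by rcases hx with h|h <;> simp [h]
  have hbound : |w₁ * x₁| ≤ Real.sqrt 2 * v := by
    have habs : |w₁ * x₁| ^ 2 = w₁ ^ 2 := by rw [sq_abs, mul_pow, hx1, mul_one]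
    nlinarith [abs_nonneg (w₁ * x₁), sq_nonneg (|w₁ * x₁| + Real.sqrt 2 * v),
      sq_nonneg (Real.sqrt 2 * v - 1)]
  have habs1 : w₁ * x₁ ≤ Real.sqrt 2 * v := (le_abs_self _).trans hbound
  have habs2 : -(w₁ * x₁) ≤ Real.sqrt 2 * v := (neg_le_abs _).trans hbound
  set t : ℝ := -(w₁ * x₁) / v with htdef
  have hvt : v * t = -(w₁ * x₁) := by
    rw [htdef]; field_simp
  constructor
  · -- part 1
    rcases hy with rfl | rfl
    · -- y = -1 : event is prediction = 1
      have hset : {z : ℝ | (if 0 < w₁ * x₁ + v * z then (1:ℝ) else -1) = -(-1)} = Set.Ioi t := by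
        ext z
        simp only [Set.mem_setOf_eq, Set.mem_Ioi, neg_neg]
        constructor
        · intro h
          by_contra hz
          push_neg at hz
          have hc : ¬ (0 < w₁ * x₁ + v * z) := by
            have := mul_le_mul_of_nonneg_left hz hvpos.le
            rw [hvt] at this
            push_neg
            linarith
          rw [if_neg hc] at h
          norm_num at h
        · intro hz
          have hc : 0 < w₁ * x₁ + v * z := by
            have := mul_lt_mul_of_pos_left hz hvpos
            rw [hvt] at this
            linarith
          rw [if_pos hc]
      rw [hset, show (-(4 * (-1:ℝ))) = 4 by norm_num,
        svm_aux_gauss_shift 4 _ measurableSet_Ioi,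
        show ((· + (4:ℝ)) ⁻¹' Set.Ioi t) = Set.Ioi (t - 4) from by
          ext z; simp only [Set.mem_preimage, Set.mem_Ioi]; constructor <;> intro <;> linarith]
      apply measure_mono
      intro z hz
      simp only [Set.mem_Ioi] at hz ⊢
      have ht : t ≤ Real.sqrt 2 := by
        rw [htdef, div_le_iff₀ hvpos]
        nlinarith
      linarith
    · -- y = 1 : event is prediction = -1
      have hset : {z : ℝ | (if 0 < w₁ * x₁ + v * z then (1:ℝ) else -1) = -1} = Set.Iic t := by
        ext z
        simp only [Set.mem_setOf_eq, Set.mem_Iic]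
        constructor
        · intro h
          by_contra hz
          push_neg at hz
          have hc : 0 < w₁ * x₁ + v * z := by
            have := mul_lt_mul_of_pos_left hz hvpos
            rw [hvt] at this
            linarith
          rw [if_pos hc] at h
          norm_num at h
        · intro hz
          have hc : ¬ (0 < w₁ * x₁ + v * z) := by
            have := mul_le_mul_of_nonneg_left hz hvpos.le
            rw [hvt] at this
            push_neg
            linarith
          rw [if_neg hc]
      rw [hset, show (-(4 * (1:ℝ))) = -4 by norm_num,
        svm_aux_gauss_shift (-4) _ measurableSet_Iic,
        show ((· + (-4:ℝ)) ⁻¹' Set.Iic t) = Set.Iic (t + 4) from by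
          ext z; simp only [Set.mem_preimage, Set.mem_Iic]; constructor <;> intro <;> linarith,
        svm_aux_gauss_symm]
      apply measure_mono
      intro z hz
      simp only [Set.mem_Iio] at hz
      simp only [Set.mem_Iic]
      have ht : -Real.sqrt 2 ≤ t := by
        rw [htdef, le_div_iff₀ hvpos]
        nlinarith
      linarith
  · -- part 2
    have hcompl : gaussianReal 0 1 (Set.Ioi (Real.sqrt 2 - 4))
        = 1 - gaussianReal 0 1 (Set.Iic (Real.sqrt 2 - 4)) := by
      rw [← Set.compl_Iic, prob_compl_eq_one_sub measurableSet_Iic]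
    rw [hcompl]
    rw [lt_tsub_iff_right]
    calc ENNReal.ofReal 0.99 + gaussianReal 0 1 (Set.Iic (Real.sqrt 2 - 4))
        < ENNReal.ofReal 0.99 + ENNReal.ofReal 0.01 :=
          ENNReal.add_lt_add_left ENNReal.ofReal_ne_top svm_aux_tail_lt
      _ = 1 := by
          rw [← ENNReal.ofReal_add (by norm_num) (by norm_num)]
          norm_num
end

section
/- A classifier depending only on x₁, namely f(x) = sign(w₁ x₁) with w₁ > 0, has both standard accuracy exactly p and adversarial accuracy exactly p against any ℓ∞ adversary with ε < 1. -/
open MeasureTheory ProbabilityTheory Real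
open scoped ENNReal NNReal

/-!
Given the label `y = ±1`, the robust feature is `x₁ = s y` with an independent flip `s = ±1`, so
almost surely `x₁ = ±1`, and `x₁ = y` exactly when `s = 1`, which has probability `p`. For
`x₁ = ±1` the classifier `sign (w₁ x₁)` returns `x₁`, and a perturbation of size `ε < 1` cannot
move `x₁` across `0`; so both events coincide almost surely with `x₁ = y`.
-/

namespace DataD

variable (p η : ℝ) (d : ℕ)

noncomputable def givenLabel (y : ℝ) : Measure ((ℝ × (Fin d → ℝ)) × ℝ) :=
  (((flipM p).map (fun s => s * y)).prod
    (Measure.pi fun _ : Fin d => gaussianReal (η * y) 1)).map (fun x => (x, y))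

lemma givenLabel_apply_feature_label (y : ℝ) {T : Set (ℝ × ℝ)} (hT : MeasurableSet T) :
    givenLabel p η d y {ω | (ω.1.1, ω.2) ∈ T} = flipM p {s | (s * y, y) ∈ T} := by
  have hS : MeasurableSet {ω : (ℝ × (Fin d → ℝ)) × ℝ | (ω.1.1, ω.2) ∈ T} :=
    (measurable_fst.fst.prodMk measurable_snd) hT
  have hslice : MeasurableSet {a : ℝ | (a, y) ∈ T} := measurable_prodMk_right hT
  rw [givenLabel, Measure.map_apply measurable_prodMk_right hS,
    show (fun x : ℝ × (Fin d → ℝ) => (x, y)) ⁻¹' {ω | (ω.1.1, ω.2) ∈ T} =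
      {a : ℝ | (a, y) ∈ T} ×ˢ Set.univ by ext; simp,
    Measure.prod_prod, measure_univ, mul_one, Measure.map_apply (measurable_mul_const y) hslice]
  rfl

lemma apply_feature_label {T : Set (ℝ × ℝ)} (hT : MeasurableSet T) :
    dataD p η d {ω | (ω.1.1, ω.2) ∈ T} =
      2⁻¹ * flipM p {s | (-s, -1) ∈ T} + 2⁻¹ * flipM p {s | (s, 1) ∈ T} := by
  have hS : MeasurableSet {ω : (ℝ × (Fin d → ℝ)) × ℝ | (ω.1.1, ω.2) ∈ T} :=
    (measurable_fst.fst.prodMk measurable_snd) hT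
  have hf : AEMeasurable (givenLabel p η d) signM := by
    unfold signM
    exact (aemeasurable_dirac.smul_measure _).add_measure (aemeasurable_dirac.smul_measure _)
  rw [show dataD p η d = signM.bind (givenLabel p η d) from rfl, Measure.bind_apply hS hf, signM,
    lintegral_add_measure, lintegral_smul_measure, lintegral_smul_measure, lintegral_dirac,
    lintegral_dirac, givenLabel_apply_feature_label p η d _ hT,
    givenLabel_apply_feature_label p η d _ hT]
  simp

lemma feature_eq_label : dataD p η d {ω | ω.1.1 = ω.2} = ENNReal.ofReal p := by
  have hflip : flipM p {1} = ENNReal.ofReal p := by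
    norm_num [flipM, Pi.single_apply]
  refine (apply_feature_label p η d measurableSet_diagonal).trans ?_
  rw [show {s : ℝ | (-s, -1) ∈ Set.diagonal ℝ} = {1} by ext; simp,
    show {s : ℝ | (s, 1) ∈ Set.diagonal ℝ} = {1} by ext; simp,
    hflip, ← add_mul, ENNReal.inv_two_add_inv_two, one_mul]

lemma ae_feature_mem : ∀ᵐ ω ∂dataD p η d, ω.1.1 ∈ ({-1, 1} : Set ℝ) := by
  have hpm : MeasurableSet ({-1, 1} : Set ℝ) := (measurableSet_singleton _).insert _
  have hflip : flipM p {-1, 1}ᶜ = 0 := by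
    simp [flipM, (dirac_eq_zero_iff_not_mem hpm.compl).2]
  refine ae_iff.2 ((apply_feature_label p η d (hpm.compl.preimage measurable_fst)).trans ?_)
  have hneg : {s : ℝ | -s ∈ ({-1, 1}ᶜ : Set ℝ)} = {-1, 1}ᶜ := by
    ext; simp [neg_eq_iff_eq_neg, or_comm]
  simp only [Set.mem_preimage, hneg, Set.ofPred_mem_eq, hflip, mul_zero, add_zero]

lemma apply_eq_ofReal_of_mem_iff {S : Set ((ℝ × (Fin d → ℝ)) × ℝ)}
    (hS : ∀ ω, ω.1.1 ∈ ({-1, 1} : Set ℝ) → (ω ∈ S ↔ ω.1.1 = ω.2)) :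
    dataD p η d S = ENNReal.ofReal p := by
  rw [← feature_eq_label p η d]
  refine measure_congr ?_
  filter_upwards [ae_feature_mem p η d] with ω hω
  exact propext (hS ω hω)

end DataD

lemma ite_zero_lt_mul_add_eq_self {w x t : ℝ} (hw : 0 < w) (hx : x ∈ ({-1, 1} : Set ℝ))
    (ht : |t| < 1) : (if 0 < w * (x + t) then (1 : ℝ) else -1) = x := by
  obtain ⟨ht₁, ht₂⟩ := abs_lt.1 ht
  rcases hx with rfl | rfl
  · exact if_neg (not_lt.2 (mul_nonpos_of_nonneg_of_nonpos hw.le (by linarith)))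
  · exact if_pos (mul_pos hw (by linarith))

theorem robust_feature_classifier_accuracy_general (p η ε w₁ : ℝ) (d : ℕ)
    (hw : 0 < w₁) (hε0 : 0 ≤ ε) (hε : ε < 1) :
    dataD p η d {ω | (if 0 < w₁ * ω.1.1 then (1:ℝ) else -1) = ω.2}
        = ENNReal.ofReal p ∧
      dataD p η d {ω | ∀ v : ℝ × (Fin d → ℝ), |v.1| ≤ ε → (∀ i, |v.2 i| ≤ ε) →
          (if 0 < w₁ * (ω.1.1 + v.1) then (1:ℝ) else -1) = ω.2}
        = ENNReal.ofReal p := by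
  have hsign : ∀ {x : ℝ}, x ∈ ({-1, 1} : Set ℝ) → (if 0 < w₁ * x then (1 : ℝ) else -1) = x :=
    fun hx => by simpa using ite_zero_lt_mul_add_eq_self hw hx (t := 0) (by simp)
  refine ⟨DataD.apply_eq_ofReal_of_mem_iff p η d fun ω hx => ?_,
    DataD.apply_eq_ofReal_of_mem_iff p η d fun ω hx => ⟨fun h => ?_, fun h v hv _ => ?_⟩⟩
  · rw [Set.mem_ofPred_eq, hsign hx]
  · simpa [hsign hx] using h 0 (by simpa using hε0) fun _ => by simpa using hε0
  · rw [ite_zero_lt_mul_add_eq_self hw hx (hv.trans_lt hε), h]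

/-- The classifier f(x) = sign(w₁ x₁) with w₁ > 0, depending only on the robust
feature x₁, has standard accuracy exactly p and adversarial accuracy exactly p
against any ℓ∞ adversary with 0 ≤ ε < 1. -/
theorem robust_feature_classifier_accuracy (p η ε w₁ : ℝ) (d : ℕ)
    (hp : 1/2 ≤ p) (hp1 : p < 1) (hw : 0 < w₁) (hε0 : 0 ≤ ε) (hε : ε < 1) :
    dataD p η d {ω | (if 0 < w₁ * ω.1.1 then (1:ℝ) else -1) = ω.2}
        = ENNReal.ofReal p ∧
      dataD p η d {ω | ∀ v : ℝ × (Fin d → ℝ), |v.1| ≤ ε → (∀ i, |v.2 i| ≤ ε) →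
          (if 0 < w₁ * (ω.1.1 + v.1) then (1:ℝ) else -1) = ω.2}
        = ENNReal.ofReal p :=
  robust_feature_classifier_accuracy_general p η ε w₁ d hw hε0 hε
end
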